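/- arXiv:2204.03600 — 3 statements merged into one kernel-verified Lean document; each statement's English description precedes it below -/
import Mathlib

section
/- Let $k[G]$ be a finite separable field extension of a field $k$, let $R$ be a commutative $k$-algebra, and let $\phi: k[G] \to R((\varpi))$ be a $k$-algebra homomorphism. Then for every $f \in k[G]$, the image $\phi(f)$ lies in $R[[\varpi]]$. -/
/-!
The image `x = φ f` is a root of the separable polynomial `P = minpoly k f`. Over a residue field
`κ` of `R`, the image of `x` is integral over the integrally closed ring `κ⟦X⟧`, whose fraction
field is `κ⸨X⸩`; so every negative coefficient of `x` lies in every prime of `R`, i.e. is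
nilpotent, and `x` differs from a power series `y` by a nilpotent. Newton's iteration started at
`y` stays in `R⟦X⟧` and converges there to a root of `P`; as roots of a separable polynomial that
differ by a nilpotent are equal, that root is `x`.
-/

open Polynomial
open scoped PowerSeries LaurentSeries

namespace Polynomial

variable {R S T : Type*} [CommRing R] [CommRing S] [CommRing T] [Algebra R S] [Algebra R T]

theorem Separable.isUnit_aeval_derivative_of_isNilpotent {P : R[X]} (hP : P.Separable) {y : S}
    (hy : IsNilpotent (aeval y P)) : IsUnit (aeval y (derivative P)) := by
  obtain ⟨a, b, hab⟩ := hP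
  have h : aeval y a * aeval y P + aeval y b * aeval y (derivative P) = 1 := by
    simpa using congrArg (aeval y) hab
  refine isUnit_of_mul_isUnit_right (x := aeval y b) ?_
  rw [eq_sub_of_add_eq' h]
  exact ((Commute.all _ _).isNilpotent_mul_left hy).isUnit_one_sub

theorem Separable.mem_range_of_isNilpotent_sub {P : R[X]} (hP : P.Separable) {ι : S →ₐ[R] T}
    (hι : Function.Injective ι) {x : T} (hx : aeval x P = 0) {y : S}
    (hxy : IsNilpotent (x - ι y)) : x ∈ ι.range := by
  have hPy : IsNilpotent (aeval y P) := by
    rw [← IsNilpotent.map_iff hι, ← aeval_algHom_apply, ← sub_zero (aeval (ι y) P), ← hx]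
    exact isNilpotent_aeval_sub_of_isNilpotent_sub P (by rwa [← neg_sub, isNilpotent_neg_iff])
  have hP'y := hP.isUnit_aeval_derivative_of_isNilpotent hPy
  obtain ⟨r, ⟨hyr, hr⟩, -⟩ := existsUnique_nilpotent_sub_and_aeval_eq_zero hPy hP'y
  have hP'x : IsUnit (aeval x (derivative P)) := by
    refine isUnit_aeval_of_isUnit_aeval_of_isNilpotent_sub ?_ hxy
    rw [aeval_algHom_apply]
    exact hP'y.map ι
  obtain ⟨_, -, huniq⟩ := existsUnique_nilpotent_sub_and_aeval_eq_zero (by simp [hx]) hP'x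
  refine ι.mem_range.mpr ⟨r, (huniq _ ⟨?_, ?_⟩).trans (huniq x ⟨by simp, hx⟩).symm⟩
  · rw [← sub_add_sub_cancel x (ι y), ← map_sub]
    exact (Commute.all _ _).isNilpotent_add hxy ((IsNilpotent.map_iff hι).mpr hyr)
  · rw [aeval_algHom_apply, hr, map_zero]

end Polynomial

namespace HahnSeries

variable {Γ R S : Type*} [AddCommMonoid Γ] [PartialOrder Γ] [IsOrderedCancelAddMonoid Γ]
  [Semiring R] [Semiring S]

@[simps]
def mapRingHom (f : R →+* S) : HahnSeries Γ R →+* HahnSeries Γ S where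
  toFun x := x.map f
  map_one' := HahnSeries.map_one f.toMonoidWithZeroHom
  map_mul' _ _ := HahnSeries.map_mul f.toNonUnitalRingHom
  map_zero' := HahnSeries.map_zero f.toZeroHom
  map_add' _ _ := HahnSeries.map_add f.toAddMonoidHom

end HahnSeries

namespace LaurentSeries

theorem exists_powerSeries_of_isIntegral {K : Type*} [Field K] {x : K⸨X⸩} (hx : IsIntegral K x) :
    ∃ y : K⟦X⟧, (y : K⸨X⸩) = x :=
  IsIntegrallyClosed.isIntegral_iff.mp
    (hx.map_of_comp_eq (algebraMap K K⟦X⟧) (RingHom.id K⸨X⸩) rfl)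

variable {R : Type*} [CommRing R]

theorem isNilpotent_coeff_of_isIntegral {x : R⸨X⸩} (hx : IsIntegral R x) {n : ℤ} (hn : n < 0) :
    IsNilpotent (x.coeff n) := by
  rw [← mem_nilradical, nilradical_eq_sInf, Ideal.mem_sInf]
  intro p (hp : p.IsPrime)
  have hcomp : (algebraMap p.ResidueField p.ResidueField⸨X⸩).comp (algebraMap R p.ResidueField)
      = (HahnSeries.mapRingHom (algebraMap R p.ResidueField)).comp (algebraMap R R⸨X⸩) := by
    refine RingHom.ext fun r ↦ ?_
    simp only [RingHom.comp_apply, HahnSeries.algebraMap_apply', PowerSeries.algebraMap_eq,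
      HahnSeries.ofPowerSeries_C, HahnSeries.C_apply, HahnSeries.mapRingHom_apply]
    exact (HahnSeries.map_single (algebraMap R p.ResidueField).toAddMonoidHom.toZeroHom).symm
  obtain ⟨y, hy⟩ := exists_powerSeries_of_isIntegral (hx.map_of_comp_eq _ _ hcomp)
  have hyn := congrArg (HahnSeries.coeff · n) hy
  simp only [PowerSeries.coeff_coe, hn, if_true, HahnSeries.mapRingHom_apply,
    HahnSeries.map_coeff] at hyn
  rw [← Ideal.ker_algebraMap_residueField p]
  exact hyn.symm

theorem exists_powerSeries_of_coeff_neg_eq_zero {x : R⸨X⸩} (hx : ∀ n < 0, x.coeff n = 0) :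
    ∃ y : R⟦X⟧, (y : R⸨X⸩) = x := by
  refine ⟨PowerSeries.mk fun n ↦ x.coeff n, HahnSeries.ext <| funext fun n ↦ ?_⟩
  rw [PowerSeries.coeff_coe]
  split_ifs with hn
  · exact (hx n hn).symm
  · simp [Int.natAbs_of_nonneg (not_lt.mp hn)]

theorem exists_powerSeries_isNilpotent_sub {x : R⸨X⸩} (hx : ∀ n < 0, IsNilpotent (x.coeff n)) :
    ∃ y : R⟦X⟧, IsNilpotent (x - y) := by
  set z : R⸨X⸩ := ∑ n ∈ Finset.Ico x.order 0, HahnSeries.single n (x.coeff n)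
  have hz : IsNilpotent z := isNilpotent_sum fun n hn ↦ by
    obtain ⟨m, hm⟩ := hx n (Finset.mem_Ico.mp hn).2
    exact ⟨m, by rw [HahnSeries.single_pow, hm, HahnSeries.single_eq_zero]⟩
  have hxz : ∀ n < 0, (x - z).coeff n = 0 := fun n hn ↦ by
    rw [HahnSeries.coeff_sub, HahnSeries.coeff_sum, sub_eq_zero]
    by_cases h : x.order ≤ n
    · rw [Finset.sum_eq_single_of_mem n (Finset.mem_Ico.mpr ⟨h, hn⟩),
        HahnSeries.coeff_single_same]
      exact fun m _ hmn ↦ HahnSeries.coeff_single_of_ne hmn.symm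
    · rw [HahnSeries.coeff_eq_zero_of_lt_order (not_le.mp h), eq_comm]
      exact Finset.sum_eq_zero fun m hm ↦ HahnSeries.coeff_single_of_ne (by grind)
  obtain ⟨y, hy⟩ := exists_powerSeries_of_coeff_neg_eq_zero hxz
  exact ⟨y, by rwa [hy, sub_sub_cancel]⟩

end LaurentSeries

theorem algHom_to_laurentSeries_mem_powerSeries_general {k kG R : Type*}
    [Field k] [Field kG] [Algebra k kG]
    [Algebra.IsSeparable k kG] [CommRing R] [Algebra k R]
    (φ : kG →ₐ[k] LaurentSeries R) :
    ∀ f : kG, ∃ p : PowerSeries R, HahnSeries.ofPowerSeries ℤ R p = φ f := by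
  intro f
  have hroot : aeval (φ f) (minpoly k f) = 0 := by
    rw [aeval_algHom_apply, minpoly.aeval, map_zero]
  have hint : IsIntegral R (φ f) :=
    (Algebra.IsSeparable.isIntegral k f).map_of_comp_eq (algebraMap k R) φ.toRingHom <| by
      ext
      simp [HahnSeries.algebraMap_apply', PowerSeries.algebraMap_apply]
  obtain ⟨y, hy⟩ := LaurentSeries.exists_powerSeries_isNilpotent_sub fun _ hn ↦
    LaurentSeries.isNilpotent_coeff_of_isIntegral hint hn
  exact (Algebra.IsSeparable.isSeparable k f).mem_range_of_isNilpotent_sub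
    (ι := ⟨HahnSeries.ofPowerSeries ℤ R, fun _ ↦ rfl⟩) HahnSeries.ofPowerSeries_injective hroot hy

/-- If `k[G]` is a finite separable field extension of `k`, `R` is a commutative
`k`-algebra, and `φ : k[G] → R((ϖ))` is a `k`-algebra homomorphism into the ring
of formal Laurent series, then the image of every `f ∈ k[G]` lies in the subring
of formal power series `R[[ϖ]]`. -/
theorem algHom_to_laurentSeries_mem_powerSeries {k kG R : Type*}
    [Field k] [Field kG] [Algebra k kG] [FiniteDimensional k kG]
    [Algebra.IsSeparable k kG] [CommRing R] [Algebra k R]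
    (φ : kG →ₐ[k] LaurentSeries R) :
    ∀ f : kG, ∃ p : PowerSeries R, HahnSeries.ofPowerSeries ℤ R p = φ f :=
  algHom_to_laurentSeries_mem_powerSeries_general φ
end

section
/- Let $k[G]$ be a finite separable field extension of a field $k$, let $R$ be a commutative $k$-algebra, and let $\phi: k[G] \to R[[\varpi]]$ be a $k$-algebra homomorphism. Then $\phi(k[G]) \subseteq R$, i.e., $\phi$ factors through the constants. -/
/-!
A separable field extension is formally unramified, so a `k`-algebra map out of it into a ring
`B` is determined by its reduction modulo any nilpotent ideal of `B`, hence also modulo any ideal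
`I` with `⋂ₙ Iⁿ = 0`. In `R⟦X⟧` take `I = (X)`: the map `φ` and the map `f ↦ C (constantCoeff (φ f))`
agree modulo `X`, so they are equal.
-/

open PowerSeries

namespace PowerSeries

def constantCoeffₐ {R : Type*} [CommSemiring R] (k : Type*) [CommSemiring k] [Algebra k R] :
    R⟦X⟧ →ₐ[k] R where
  __ := constantCoeff (R := R)
  commutes' r := by simp [algebraMap_apply]

theorem iInf_span_X_pow_eq_bot {R : Type*} [CommRing R] :
    ⨅ n : ℕ, (Ideal.span {X} : Ideal R⟦X⟧) ^ n = ⊥ := by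
  simpa using
    (IsAdicComplete.toIsHausdorff (I := Ideal.span {(X : R⟦X⟧)}) (M := R⟦X⟧)).iInf_pow_smul

end PowerSeries

theorem Algebra.FormallyUnramified.algHom_powerSeries_eq_C_constantCoeff {k A R : Type*}
    [CommRing k] [CommRing A] [Algebra k A] [Algebra.FormallyUnramified k A]
    [CommRing R] [Algebra k R] (φ : A →ₐ[k] R⟦X⟧) (a : A) :
    φ a = C (constantCoeff (φ a)) := by
  have hφ : φ = (IsScalarTower.toAlgHom k R R⟦X⟧).comp ((constantCoeffₐ k).comp φ) :=
    Algebra.FormallyUnramified.ext_of_iInf (Ideal.span {X}) iInf_span_X_pow_eq_bot fun x => by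
      rw [Ideal.Quotient.eq, Ideal.mem_span_singleton]
      simp [X_dvd_iff, constantCoeffₐ]
  exact DFunLike.congr_fun hφ a

theorem algHom_to_powerSeries_factors_through_constants_general {k kG R : Type*}
    [Field k] [Field kG] [Algebra k kG]
    [Algebra.IsSeparable k kG] [CommRing R] [Algebra k R]
    (φ : kG →ₐ[k] PowerSeries R) :
    ∀ f : kG, ∃ r : R, φ f = PowerSeries.C (R := R) r := by
  have := Algebra.FormallyUnramified.of_isSeparable k kG
  exact fun f => ⟨_, Algebra.FormallyUnramified.algHom_powerSeries_eq_C_constantCoeff φ f⟩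

/-- If `k[G]` is a finite separable field extension of `k`, `R` is a commutative
`k`-algebra, and `φ : k[G] → R[[ϖ]]` is a `k`-algebra homomorphism into the ring
of formal power series, then `φ` factors through the constants: the image of
every `f ∈ k[G]` is a constant power series. -/
theorem algHom_to_powerSeries_factors_through_constants {k kG R : Type*}
    [Field k] [Field kG] [Algebra k kG] [FiniteDimensional k kG]
    [Algebra.IsSeparable k kG] [CommRing R] [Algebra k R]
    (φ : kG →ₐ[k] PowerSeries R) :
    ∀ f : kG, ∃ r : R, φ f = PowerSeries.C (R := R) r :=
  algHom_to_powerSeries_factors_through_constants_general φ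
end

section
/- Define the piecewise-linear map $R: \mathbb{Z}_{\ge 0}^3 \to \mathbb{Z}_{\ge 0}^3$ by $R(n_1, n_2, n_3) = (n_2 + n_3 - p,\ p,\ n_1 + n_2 - p)$ where $p = \min\{n_1, n_3\}$. Then $R$ is an involution: $R(R(n_1, n_2, n_3)) = (n_1, n_2, n_3)$ for all $(n_1, n_2, n_3) \in \mathbb{Z}_{\ge 0}^3$. Moreover $R$ preserves the quantity $n_1 \alpha^\vee + n_2(\alpha^\vee + \beta^\vee) + n_3 \beta^\vee$ in the sense that $n_1 + n_2 = R(n)_2 + R(n)_3$ and $n_2 + n_3 = R(n)_1 + R(n)_2$. -/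
/-- Lusztig's piecewise-linear transition map for a type-`A₂` braid move,
acting on Lusztig data `(n₁, n₂, n₃) ∈ ℤ³₍≥0₎`. -/
def lusztigR (n : ℕ × ℕ × ℕ) : ℕ × ℕ × ℕ :=
  let p := min n.1 n.2.2
  (n.2.1 + n.2.2 - p, p, n.1 + n.2.1 - p)

/-- The map `R(n₁,n₂,n₃) = (n₂+n₃-p, p, n₁+n₂-p)` with `p = min{n₁,n₃}` is an
involution of `ℤ³₍≥0₎`, and it preserves the quantities `n₂+n₃` and `n₁+n₂` in the
sense that `n₁+n₂ = R(n)₂+R(n)₃` and `n₂+n₃ = R(n)₁+R(n)₂`. -/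
theorem lusztigR_involutive_and_weight_preserving (n : ℕ × ℕ × ℕ) :
    lusztigR (lusztigR n) = n ∧
    n.1 + n.2.1 = (lusztigR n).2.1 + (lusztigR n).2.2 ∧
    n.2.1 + n.2.2 = (lusztigR n).1 + (lusztigR n).2.1 := by
  obtain ⟨a, b, c⟩ := n
  simp only [lusztigR, Prod.mk.injEq]
  rcases le_total a c with h | h <;>
    simp [min_eq_left, min_eq_right, h] <;> omega
end
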